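/- arXiv:2310.19456 — 2 statements merged into one kernel-verified Lean document; each statement's English description precedes it below -/
import Mathlib

section
/- Let E be a complex normed vector space and let V be a ℂ-linear subspace of the space of functions from ℝ to E satisfying: (i) every g ∈ V is differentiable on ℝ; (ii) if g ∈ V then its derivative g' belongs to V; (iii) every g ∈ V satisfies g(0) = 0; (iv) V is finite-dimensional over ℂ. Then V = {0}. -/
/-- ODE uniqueness: a differentiable eigenfunction of `deriv` vanishing at `0` is zero. -/
lemma eigenfun_zero {E : Type*} [NormedAddCommGroup E] [NormedSpace ℂ E]
    (g : ℝ → E) (hg : Differentiable ℝ g) (c : ℂ)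
    (heig : ∀ t, deriv g t = c • g t) (h0 : g 0 = 0) : g = 0 := by
  set h : ℝ → E := fun t => Complex.exp (-(c * t)) • g t with hh
  have hderiv : ∀ t : ℝ, HasDerivAt h 0 t := by
    intro t
    have h1 : HasDerivAt (fun t : ℝ => -(c * (t : ℂ))) (-c) t := by
      have : HasDerivAt (fun t : ℝ => (t : ℂ)) 1 t := Complex.ofRealCLM.hasDerivAt
      exact ((this.const_mul c).neg).congr_deriv (by simp)
    have h2 : HasDerivAt (fun t : ℝ => Complex.exp (-(c * t)))
        (Complex.exp (-(c * t)) * (-c)) t := h1.cexp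
    have h3 : HasDerivAt g (c • g t) t := by
      have := (hg t).hasDerivAt
      rwa [heig t] at this
    have h4 : Complex.exp (-(c * t)) • c • g t + (Complex.exp (-(c * t)) * -c) • g t = 0 := by
      rw [smul_smul, mul_neg, neg_smul]; abel
    have h5 := h2.smul h3
    rw [h4] at h5
    exact h5
  have hconst : ∀ t : ℝ, h t = h 0 := by
    intro t
    exact is_const_of_deriv_eq_zero (fun x => (hderiv x).differentiableAt)
      (fun x => (hderiv x).deriv) t 0
  funext t
  have := hconst t
  simp only [hh, h0, smul_zero, Complex.ofReal_zero] at this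
  rcases smul_eq_zero.mp this with hc | hg0
  · exact absurd hc (Complex.exp_ne_zero _)
  · simpa using hg0

/-- A finite-dimensional complex space of differentiable `E`-valued functions on `ℝ`,
stable under differentiation, all of whose elements vanish at `0`, is trivial. -/
theorem submodule_eq_bot_of_stable_deriv
    {E : Type*} [NormedAddCommGroup E] [NormedSpace ℂ E]
    (V : Submodule ℂ (ℝ → E))
    (hdiff : ∀ g ∈ V, Differentiable ℝ g)
    (hstab : ∀ g ∈ V, deriv g ∈ V)
    (h0 : ∀ g ∈ V, g 0 = 0)
    (hfin : FiniteDimensional ℂ V) :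
    V = ⊥ := by
  by_contra hV
  haveI : Nontrivial V := Submodule.nontrivial_iff_ne_bot.mpr hV
  -- differentiation as an endomorphism of V
  let D : Module.End ℂ V :=
    { toFun := fun g => ⟨deriv g, hstab g g.2⟩
      map_add' := by
        intro f g
        ext t
        have : deriv ((f : ℝ → E) + (g : ℝ → E)) t = deriv (f : ℝ → E) t + deriv (g : ℝ → E) t :=
          deriv_add ((hdiff f f.2 t)) ((hdiff g g.2 t))
        simpa [Submodule.coe_add] using this
      map_smul' := by
        intro a g
        ext t
        have : deriv (a • (g : ℝ → E)) t = a • deriv (g : ℝ → E) t :=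
          deriv_const_smul a (hdiff g g.2 t)
        simpa [Submodule.coe_smul] using this }
  obtain ⟨c, hc⟩ := Module.End.exists_eigenvalue D
  obtain ⟨g, hg⟩ := hc.exists_hasEigenvector
  have heig : ∀ t, deriv (g : ℝ → E) t = c • (g : ℝ → E) t := by
    intro t
    have h6 : D g = c • g := hg.apply_eq_smul
    have := congrArg (fun v : V => (v : ℝ → E) t) h6
    simpa [D] using this
  have hz : (g : ℝ → E) = 0 :=
    eigenfun_zero (g : ℝ → E) (hdiff g g.2) c heig (h0 g g.2)
  exact hg.2 (Subtype.ext (by simpa using hz))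
end

section
/- Let n ≥ 2, let s < 0 be a real number, and let c > 0. Set E_c = {(τ, ξ) ∈ ℝ × ℝ^{n−1} : |τ| ≤ c‖ξ‖}. Then there exist constants 0 < C₁ ≤ C₂ such that for every measurable function F : ℝ × ℝ^{n−1} → ℂ vanishing almost everywhere outside E_c, one has C₁·∫ (1 + τ² + ‖ξ‖²)^s |F(τ,ξ)|² dτ dξ ≤ ∫ (1 + ‖ξ‖²)^s |F(τ,ξ)|² dτ dξ ≤ C₂·∫ (1 + τ² + ‖ξ‖²)^s |F(τ,ξ)|² dτ dξ, where the integrals are Lebesgue integrals of nonnegative measurable functions with values in [0, ∞]. -/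
/-!
For `s ≤ 0` the weight `(1 + τ² + ‖ξ‖²)^s` never exceeds `(1 + ‖ξ‖²)^s`. Conversely, on the cone
`|τ| ≤ c‖ξ‖` one has `1 + τ² + ‖ξ‖² ≤ (1 + c²)(1 + ‖ξ‖²)`, so there `(1 + ‖ξ‖²)^s` is at most
`(1 + c²)^(-s)` times the full weight; off the cone `F` vanishes and both integrands are zero.
-/

open MeasureTheory Real

theorem lintegral_ofReal_le_ofReal_mul_lintegral {α : Type*} [MeasurableSpace α] {μ : Measure α}
    {f g : α → ℝ} {C : ℝ} (hC : 0 ≤ C) (hfg : ∀ᵐ x ∂μ, f x ≤ C * g x) :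
    ∫⁻ x, ENNReal.ofReal (f x) ∂μ ≤ ENNReal.ofReal C * ∫⁻ x, ENNReal.ofReal (g x) ∂μ := by
  rw [← lintegral_const_mul' _ _ ENNReal.ofReal_ne_top]
  refine lintegral_mono_ae (hfg.mono fun x hx => ?_)
  rw [← ENNReal.ofReal_mul hC]
  exact ENNReal.ofReal_le_ofReal hx

theorem rpow_one_add_sq_add_sq_le {s : ℝ} (hs : s ≤ 0) (τ ρ : ℝ) :
    (1 + τ ^ 2 + ρ ^ 2) ^ s ≤ (1 + ρ ^ 2) ^ s :=
  rpow_le_rpow_of_nonpos (by positivity) (by linarith [sq_nonneg τ]) hs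

theorem rpow_one_add_sq_le_of_abs_le_mul {s τ ρ c : ℝ} (hs : s ≤ 0) (h : |τ| ≤ c * ρ) :
    (1 + ρ ^ 2) ^ s ≤ (1 + c ^ 2) ^ (-s) * (1 + τ ^ 2 + ρ ^ 2) ^ s := by
  have hτ : τ ^ 2 ≤ (c * ρ) ^ 2 := sq_le_sq.mpr (h.trans (le_abs_self _))
  have hcone : 1 + τ ^ 2 + ρ ^ 2 ≤ (1 + c ^ 2) * (1 + ρ ^ 2) := by nlinarith [sq_nonneg c]
  calc (1 + ρ ^ 2) ^ s = (1 + c ^ 2) ^ (-s) * ((1 + c ^ 2) * (1 + ρ ^ 2)) ^ s := by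
        rw [mul_rpow (by positivity) (by positivity), ← mul_assoc, ← rpow_add (by positivity),
          neg_add_cancel, rpow_zero, one_mul]
    _ ≤ (1 + c ^ 2) ^ (-s) * (1 + τ ^ 2 + ρ ^ 2) ^ s :=
        mul_le_mul_of_nonneg_left (rpow_le_rpow_of_nonpos (by positivity) hcone hs)
          (by positivity)

theorem tangential_sobolev_norm_equivalence_on_cone_general
    (n : ℕ) (s : ℝ) (hs : s < 0) (c : ℝ) :
    ∃ C₁ C₂ : ℝ, 0 < C₁ ∧ C₁ ≤ C₂ ∧
      ∀ F : ℝ × EuclideanSpace ℝ (Fin (n - 1)) → ℂ, Measurable F →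
        (∀ᵐ p : ℝ × EuclideanSpace ℝ (Fin (n - 1)),
          ¬ (|p.1| ≤ c * ‖p.2‖) → F p = 0) →
        ENNReal.ofReal C₁ *
            (∫⁻ p : ℝ × EuclideanSpace ℝ (Fin (n - 1)),
              ENNReal.ofReal ((1 + p.1 ^ 2 + ‖p.2‖ ^ 2) ^ s * ‖F p‖ ^ 2)) ≤
          (∫⁻ p : ℝ × EuclideanSpace ℝ (Fin (n - 1)),
            ENNReal.ofReal ((1 + ‖p.2‖ ^ 2) ^ s * ‖F p‖ ^ 2)) ∧
        (∫⁻ p : ℝ × EuclideanSpace ℝ (Fin (n - 1)),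
            ENNReal.ofReal ((1 + ‖p.2‖ ^ 2) ^ s * ‖F p‖ ^ 2)) ≤
          ENNReal.ofReal C₂ *
            (∫⁻ p : ℝ × EuclideanSpace ℝ (Fin (n - 1)),
              ENNReal.ofReal ((1 + p.1 ^ 2 + ‖p.2‖ ^ 2) ^ s * ‖F p‖ ^ 2)) := by
  refine ⟨1, (1 + c ^ 2) ^ (-s), one_pos,
    one_le_rpow (by linarith [sq_nonneg c]) (by linarith), fun F _ hF => ⟨?_, ?_⟩⟩
  · rw [ENNReal.ofReal_one, one_mul]
    exact lintegral_mono fun p => ENNReal.ofReal_le_ofReal <|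
      mul_le_mul_of_nonneg_right (rpow_one_add_sq_add_sq_le hs.le _ _) (by positivity)
  · refine lintegral_ofReal_le_ofReal_mul_lintegral (by positivity) (hF.mono fun p hp => ?_)
    by_cases hcone : |p.1| ≤ c * ‖p.2‖
    · rw [← mul_assoc]
      exact mul_le_mul_of_nonneg_right (rpow_one_add_sq_le_of_abs_le_mul hs.le hcone)
        (by positivity)
    · simp [hp hcone]

/-- Equivalence of the full `H^s(ℝⁿ)` weight and the tangential `L²(ℝ; H^s(ℝ^{n-1}))` weight
for functions with (Fourier) support in the cone `E_c = {(τ,ξ) : |τ| ≤ c ‖ξ‖}`, `s < 0`. -/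
theorem tangential_sobolev_norm_equivalence_on_cone
    (n : ℕ) (hn : 2 ≤ n) (s : ℝ) (hs : s < 0) (c : ℝ) (hc : 0 < c) :
    ∃ C₁ C₂ : ℝ, 0 < C₁ ∧ C₁ ≤ C₂ ∧
      ∀ F : ℝ × EuclideanSpace ℝ (Fin (n - 1)) → ℂ, Measurable F →
        (∀ᵐ p : ℝ × EuclideanSpace ℝ (Fin (n - 1)),
          ¬ (|p.1| ≤ c * ‖p.2‖) → F p = 0) →
        ENNReal.ofReal C₁ *
            (∫⁻ p : ℝ × EuclideanSpace ℝ (Fin (n - 1)),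
              ENNReal.ofReal ((1 + p.1 ^ 2 + ‖p.2‖ ^ 2) ^ s * ‖F p‖ ^ 2)) ≤
          (∫⁻ p : ℝ × EuclideanSpace ℝ (Fin (n - 1)),
            ENNReal.ofReal ((1 + ‖p.2‖ ^ 2) ^ s * ‖F p‖ ^ 2)) ∧
        (∫⁻ p : ℝ × EuclideanSpace ℝ (Fin (n - 1)),
            ENNReal.ofReal ((1 + ‖p.2‖ ^ 2) ^ s * ‖F p‖ ^ 2)) ≤
          ENNReal.ofReal C₂ *
            (∫⁻ p : ℝ × EuclideanSpace ℝ (Fin (n - 1)),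
              ENNReal.ofReal ((1 + p.1 ^ 2 + ‖p.2‖ ^ 2) ^ s * ‖F p‖ ^ 2)) :=
  tangential_sobolev_norm_equivalence_on_cone_general n s hs c
end
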